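/- Let S be a regular category (complete, or with X finite), C a simplicial complex on X, A an S-valued separated presheaf on C with A ↪ F for a sheaf F extended to all of P(X) by F(U) = ∏_{x∈U}F({x}). Define ⋈A = ⋀_{U∈C} (F_{U⊆X})⁻¹(A_U) as a subobject of F(X). Then ⋈A, together with the arrows ρ_U : ⋈A → A_U obtained by restricting F_{U⊆X}, is a limit of the diagram A : C^op → S. -/

import Mathlib

open CategoryTheory CategoryTheory.Limits Opposite
open scoped Classical

/-- An abstract simplicial complex on a vertex set `X`. -/
structure SC (X : Type) where
  faces : Set (Finset X)
  down_closed : ∀ {s t : Finset X}, s ∈ faces → t ⊆ s → t ∈ faces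
  singleton_mem : ∀ x : X, {x} ∈ faces

/-- The poset of faces of a simplicial complex, ordered by inclusion. -/
def Face {X : Type} (C : SC X) : Type := {U : Finset X // U ∈ C.faces}

instance {X : Type} (C : SC X) : PartialOrder (Face C) :=
  Subtype.partialOrder _

/-- The singleton face on a vertex. -/
def sFace {X : Type} (C : SC X) (x : X) : Face C := ⟨{x}, C.singleton_mem x⟩

variable {S : Type*} [Category S]

/-- An `S`-valued presheaf on the simplicial complex `C`. -/
abbrev Psh {X : Type} (C : SC X) (S : Type*) [Category S] : Type _ :=
  (Face C)ᵒᵖ ⥤ S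

/-- The restriction arrow `P(V) ⟶ P(U)` for faces `U ⊆ V`. -/
def resA {X : Type} {C : SC X} (P : Psh C S) {U V : Face C} (h : U ≤ V) :
    P.obj (op V) ⟶ P.obj (op U) :=
  P.map (homOfLE h).op

/-- The canonical arrow `P(U) ⟶ ∏_{x∈U} P({x})`. -/
noncomputable def canMap {X : Type} {C : SC X} [HasFiniteLimits S]
    (P : Psh C S) (U : Face C) :
    P.obj (op U) ⟶ ∏ᶜ (fun x : {x // x ∈ U.1} => P.obj (op (sFace C x.1))) :=
  Pi.lift fun x => resA P (show sFace C x.1 ≤ U from Finset.singleton_subset_iff.mpr x.2)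

/-- The arrow `P(U) ⟶ ∏ᵢ P(Uᵢ)` for a cover `⋃ᵢ Uᵢ = U`. -/
noncomputable def coverMap {X : Type} {C : SC X} [HasFiniteLimits S]
    (P : Psh C S) {ι : Type} [Fintype ι] (Ui : ι → Face C) (U : Face C)
    (hcov : ∀ i, Ui i ≤ U) :
    P.obj (op U) ⟶ ∏ᶜ (fun i => P.obj (op (Ui i))) :=
  Pi.lift fun i => resA P (hcov i)

/-- The intersection of two faces, as a face. -/
noncomputable def interFace {X : Type} (C : SC X) (U V : Face C) : Face C :=
  ⟨U.1 ∩ V.1, C.down_closed U.2 (by classical exact Finset.inter_subset_left)⟩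

/-- The first comparison arrow `∏ᵢ P(Uᵢ) ⟶ ∏_{j,k} P(Uⱼ ∩ U_k)`. -/
noncomputable def cmpL {X : Type} {C : SC X} [HasFiniteLimits S]
    (P : Psh C S) {ι : Type} [Fintype ι] (Ui : ι → Face C) :
    (∏ᶜ (fun i => P.obj (op (Ui i)))) ⟶
      ∏ᶜ (fun jk : ι × ι => P.obj (op (interFace C (Ui jk.1) (Ui jk.2)))) :=
  Pi.lift fun jk => Pi.π _ jk.1 ≫
    resA P (show interFace C (Ui jk.1) (Ui jk.2) ≤ Ui jk.1 from by
      classical exact Finset.inter_subset_left)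

/-- The second comparison arrow `∏ᵢ P(Uᵢ) ⟶ ∏_{j,k} P(Uⱼ ∩ U_k)`. -/
noncomputable def cmpR {X : Type} {C : SC X} [HasFiniteLimits S]
    (P : Psh C S) {ι : Type} [Fintype ι] (Ui : ι → Face C) :
    (∏ᶜ (fun i => P.obj (op (Ui i)))) ⟶
      ∏ᶜ (fun jk : ι × ι => P.obj (op (interFace C (Ui jk.1) (Ui jk.2)))) :=
  Pi.lift fun jk => Pi.π _ jk.2 ≫
    resA P (show interFace C (Ui jk.1) (Ui jk.2) ≤ Ui jk.2 from by
      classical exact Finset.inter_subset_right)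

/-- The sheaf condition for an `S`-valued presheaf on a simplicial complex:
for every (finite) cover `⋃ᵢ Uᵢ = U`, the arrow `P(U) ⟶ ∏ᵢ P(Uᵢ)` is the
equalizer of the two comparison arrows into `∏_{j,k} P(Uⱼ ∩ U_k)`. -/
def IsSheafS {X : Type} {C : SC X} [HasFiniteLimits S] (P : Psh C S) : Prop :=
  ∀ (ι : Type) (_ : Fintype ι) (Ui : ι → Face C) (U : Face C)
    (hcov : ∀ i, Ui i ≤ U), (∀ x, x ∈ U.1 → ∃ i, x ∈ (Ui i).1) →
    (∀ (W : S) (k : W ⟶ ∏ᶜ (fun i => P.obj (op (Ui i)))),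
      k ≫ cmpL P Ui = k ≫ cmpR P Ui →
      ∃! l : W ⟶ P.obj (op U), l ≫ coverMap P Ui U hcov = k)

/-- The separatedness condition: for every (finite) cover `⋃ᵢ Uᵢ = U`, the
arrow `P(U) ⟶ ∏ᵢ P(Uᵢ)` is a monomorphism. -/
def IsSeparatedS {X : Type} {C : SC X} [HasFiniteLimits S] (P : Psh C S) : Prop :=
  ∀ (ι : Type) (_ : Fintype ι) (Ui : ι → Face C) (U : Face C)
    (hcov : ∀ i, Ui i ≤ U), (∀ x, x ∈ U.1 → ∃ i, x ∈ (Ui i).1) →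
    Mono (coverMap P Ui U hcov)

/-- A regular category: finite limits, regular-epi/mono image factorizations,
and regular epimorphisms stable under pullback. -/
class RegCat (S : Type*) [Category S] [HasFiniteLimits S] [HasImages S] :
    Prop where
  regEpi_factorThruImage : ∀ {A B : S} (f : A ⟶ B),
    Nonempty (RegularEpi (factorThruImage f))
  regEpi_pullback_stable : ∀ {A B D : S} (f : A ⟶ B) (g : D ⟶ B),
    Nonempty (RegularEpi f) → Nonempty (RegularEpi (pullback.snd f g))

/-- The object `F(X) = ∏_{x∈X} F({x})`, extending the sheaf `F` to the full
vertex set. -/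
noncomputable def FXobj {X : Type} [Fintype X] {C : SC X} {S : Type*}
    [Category S] [HasFiniteLimits S] (F : Psh C S) : S :=
  ∏ᶜ fun x : X => F.obj (op (sFace C x))

/-- The projection `F(X) ⟶ F(U)` for a face `U`, using the sheaf property of
`F` (in its pointwise form `F(U) ≅ ∏_{x∈U} F({x})`). -/
noncomputable def projX {X : Type} [Fintype X] {C : SC X} {S : Type*}
    [Category S] [HasFiniteLimits S] (F : Psh C S)
    (hF : ∀ U : Face C, IsIso (canMap F U)) (U : Face C) :
    FXobj F ⟶ F.obj (op U) :=
  (Pi.lift fun x : {x // x ∈ U.1} =>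
      Pi.π (fun x : X => F.obj (op (sFace C x))) x.1) ≫
    (haveI := hF U; inv (canMap F U))

/-!
A cone `w` over `A` with vertex `W` yields `k : W ⟶ F(X) = ∏ₓ F({x})` from its vertex components.
Compatibility of `w` along the inclusions `{x} ⊆ U` gives `k ≫ F_{U⊆X} = w_U ≫ (A_U ↪ F(U))`, so
`k` factors through every `F_{U⊆X}⁻¹(A_U)`. The image of `k`, being the least subobject through
which `k` factors, therefore lies below their meet `⋈A`, and `k` factors through `⋈A`. The
factorization is unique because the projections of `F(X)` to the vertices are jointly monic.
-/

namespace CategoryTheory.Subobject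

variable {W Y : S}

lemma comp_arrow_comp_eq_of_le_pullback [HasPullbacks S] {Z : S} {f : Y ⟶ Z} {P : Subobject Y}
    {Q : Subobject Z} (hPQ : P ≤ (pullback f).obj Q) {a : W ⟶ P} {b : W ⟶ Q}
    (hab : ∀ g : (P : S) ⟶ Q, g ≫ Q.arrow = P.arrow ≫ f → a ≫ g = b) :
    a ≫ P.arrow ≫ f = b ≫ Q.arrow := by
  have hQ : Q.Factors (P.arrow ≫ f) :=
    (pullback_factors_iff f Q P.arrow).mp (factors_of_le P.arrow hPQ (factors_self P))
  rw [← factorThru_arrow Q _ hQ, ← hab _ (factorThru_arrow Q _ hQ), Category.assoc]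

lemma factors_of_forall_factors_comp [HasPullbacks S] [HasImages S] {ι : Type*}
    {Z : ι → S} {f : ∀ i, Y ⟶ Z i} {Q : ∀ i, Subobject (Z i)} {N : Subobject Y}
    (hN : ∀ T : Subobject Y, (∀ i, T ≤ (pullback (f i)).obj (Q i)) → T ≤ N)
    {k : W ⟶ Y} (hk : ∀ i, (Q i).Factors (k ≫ f i)) : N.Factors k := by
  have hle : imageSubobject k ≤ N := hN _ fun i =>
    have hfac := (pullback_factors_iff (f i) (Q i) k).mpr (hk i)
    imageSubobject_le k _ (factorThru_arrow _ k hfac)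
  exact factors_of_le k hle ((factors_iff _ k).mpr ⟨_, imageSubobject_arrow_comp k⟩)

end CategoryTheory.Subobject

section

variable {X : Type} {C : SC X}

lemma sFace_le {x : X} {U : Face C} (hx : x ∈ U.1) : sFace C x ≤ U :=
  Finset.singleton_subset_iff.mpr hx

lemma resA_refl (P : Psh C S) (U : Face C) : resA P (le_refl U) = 𝟙 _ := by
  simp [resA]

variable [Fintype X] [HasFiniteLimits S] {F : Psh C S} (hF : ∀ U : Face C, IsIso (canMap F U))

lemma projX_comp_canMap (U : Face C) :
    projX F hF U ≫ canMap F U =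
      Pi.lift (P := FXobj F) fun x : {x // x ∈ U.1} =>
        Pi.π (fun x => F.obj (op (sFace C x))) x.1 := by
  have := hF U
  simp only [projX, Category.assoc, IsIso.inv_hom_id, Category.comp_id]

lemma comp_projX_eq {Y : S} {g : Y ⟶ FXobj F} {U : Face C} {v : Y ⟶ F.obj (op U)}
    (h : ∀ x (hx : x ∈ U.1), g ≫ Pi.π _ x = v ≫ resA F (sFace_le hx)) :
    g ≫ projX F hF U = v := by
  have := hF U
  rw [← cancel_mono (canMap F U), Category.assoc, projX_comp_canMap]
  refine Pi.hom_ext _ _ fun x => ?_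
  simp only [canMap, Category.assoc, limit.lift_π, Fan.mk_π_app]
  exact h x.1 x.2

lemma projX_sFace (x : X) : projX F hF (sFace C x) = Pi.π _ x := by
  simpa using comp_projX_eq hF (g := 𝟙 _) fun y hy => by
    obtain rfl : y = x := Finset.mem_singleton.mp hy
    simp [resA_refl, FXobj]

lemma hom_ext_of_comp_projX {Y : S} {g g' : Y ⟶ FXobj F}
    (h : ∀ U : Face C, g ≫ projX F hF U = g' ≫ projX F hF U) : g = g' :=
  Pi.hom_ext _ _ fun x => by
    have := h (sFace C x)
    rwa [projX_sFace] at this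

end

theorem stmt12_general {X : Type} [Fintype X] {C : SC X} {S : Type*} [Category S]
    [HasFiniteLimits S] [HasImages S]
    (F : Psh C S) (hF : ∀ U : Face C, IsIso (canMap F U))
    (A : ∀ U : Face C, Subobject (F.obj (op U)))
    (hA : ∀ (U V : Face C) (h : U ≤ V),
      A V ≤ (Subobject.pullback (resA F h)).obj (A U))
    -- `N` is the meet `⋀_{U∈C} (F_{U⊆X})⁻¹(A_U)` in `Sub(F(X))`:
    (N : Subobject (FXobj F))
    (hN : ∀ T : Subobject (FXobj F),
      (∀ U : Face C, T ≤ (Subobject.pullback (projX F hF U)).obj (A U)) ↔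
        T ≤ N)
    -- `ρ_U : ⋈A ⟶ A_U` is obtained by restricting the projection `F_{U⊆X}`:
    (ρ : ∀ U : Face C, ((N : S) ⟶ (A U : S)))
    (hρ : ∀ U : Face C, ρ U ≫ (A U).arrow = N.arrow ≫ projX F hF U) :
    -- `(N, ρ)` is terminal among cones over the diagram `A`:
    ∀ (W : S) (w : ∀ U : Face C, W ⟶ (A U : S)),
      (∀ (U V : Face C) (h : U ≤ V) (g : ((A V : S) ⟶ (A U : S))),
        g ≫ (A U).arrow = (A V).arrow ≫ resA F h → w V ≫ g = w U) →
      ∃! m : W ⟶ (N : S), ∀ U : Face C, m ≫ ρ U = w U := by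
  intro W w hw
  let k : W ⟶ FXobj F := Pi.lift fun x => w (sFace C x) ≫ (A (sFace C x)).arrow
  have hk (U : Face C) : k ≫ projX F hF U = w U ≫ (A U).arrow :=
    comp_projX_eq hF fun x hx => by
      simpa [k, FXobj] using (Subobject.comp_arrow_comp_eq_of_le_pullback (hA _ U (sFace_le hx))
        (hw _ U (sFace_le hx))).symm
  have hkN : N.Factors k :=
    Subobject.factors_of_forall_factors_comp (fun T => (hN T).mp) fun U => by
      rw [hk]; exact Subobject.factors_comp_arrow _
  refine ⟨N.factorThru k hkN, fun U => ?_, fun m hm => ?_⟩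
  · rw [← cancel_mono (A U).arrow, Category.assoc, hρ, Subobject.factorThru_arrow_assoc, hk]
  · rw [← cancel_mono N.arrow, Subobject.factorThru_arrow]
    refine hom_ext_of_comp_projX hF fun U => ?_
    rw [Category.assoc, ← hρ, ← Category.assoc, hm, hk]

/-- Let `F` be a sheaf on a simplicial complex `C` on a
finite `X`, valued in a regular category, `A ↪ F` a separated subpresheaf,
and `⋈A = ⋀_{U∈C} F_{U⊆X}⁻¹(A_U) ≤ F(X)` the natural join. Then `⋈A`,
together with the arrows `ρ_U : ⋈A ⟶ A_U` obtained by restricting the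
projections `F_{U⊆X}`, is a limit of the diagram `A : C^op → S`: it is
terminal among cones over `A`. -/
theorem stmt12 {X : Type} [Fintype X] {C : SC X} {S : Type*} [Category S]
    [HasFiniteLimits S] [HasImages S] [RegCat S]
    (F : Psh C S) (hF : ∀ U : Face C, IsIso (canMap F U))
    (A : ∀ U : Face C, Subobject (F.obj (op U)))
    (hA : ∀ (U V : Face C) (h : U ≤ V),
      A V ≤ (Subobject.pullback (resA F h)).obj (A U))
    -- `N` is the meet `⋀_{U∈C} (F_{U⊆X})⁻¹(A_U)` in `Sub(F(X))`:
    (N : Subobject (FXobj F))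
    (hN : ∀ T : Subobject (FXobj F),
      (∀ U : Face C, T ≤ (Subobject.pullback (projX F hF U)).obj (A U)) ↔
        T ≤ N)
    -- `ρ_U : ⋈A ⟶ A_U` is obtained by restricting the projection `F_{U⊆X}`:
    (ρ : ∀ U : Face C, ((N : S) ⟶ (A U : S)))
    (hρ : ∀ U : Face C, ρ U ≫ (A U).arrow = N.arrow ≫ projX F hF U) :
    -- `(N, ρ)` is terminal among cones over the diagram `A`:
    ∀ (W : S) (w : ∀ U : Face C, W ⟶ (A U : S)),
      (∀ (U V : Face C) (h : U ≤ V) (g : ((A V : S) ⟶ (A U : S))),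
        g ≫ (A U).arrow = (A V).arrow ≫ resA F h → w V ≫ g = w U) →
      ∃! m : W ⟶ (N : S), ∀ U : Face C, m ≫ ρ U = w U :=
  stmt12_general F hF A hA N hN ρ hρ
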